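/- arXiv:0810.4220 — 3 statements merged into one kernel-verified Lean document; each statement's English description precedes it below -/
import Mathlib

section
/- Jacobi triple product identity: for all complex q, z with 0 < |q| < 1 and z ≠ 0, one has (z;q)_∞ (q z^{-1};q)_∞ (q;q)_∞ = Σ_{m∈ℤ} q^{m(m-1)/2} (−z)^m. -/
noncomputable section

open Finset Filter Topology

/-- The q-Pochhammer infinite product `(z; q)_∞ = ∏_{k ≥ 0} (1 - z q^k)`. -/
def qPochC (z q : ℂ) : ℂ := ∏' k : ℕ, (1 - z * q ^ k)

namespace JTP

variable {w : ℂ}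

/-- partial products of `(q;q)` -/
def Pk (q : ℂ) (n : ℕ) : ℂ := ∏ j ∈ Finset.range n, (1 - q * q ^ j)

/-- Gaussian binomial coefficient (as a complex number), zero outside range. -/
def GB (q : ℂ) (n : ℕ) (k : ℤ) : ℂ :=
  if 0 ≤ k ∧ k ≤ (n : ℤ) then Pk q n / (Pk q k.toNat * Pk q (n - k.toNat)) else 0

variable {q : ℂ}

lemma Pk_zero : Pk q 0 = 1 := by simp [Pk]

lemma Pk_succ (n : ℕ) : Pk q (n + 1) = Pk q n * (1 - q * q ^ n) := by
  simp [Pk, Finset.prod_range_succ]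

lemma GB_neg {n : ℕ} {k : ℤ} (h : k < 0) : GB q n k = 0 := by
  rw [GB, if_neg]; omega

lemma GB_gt {n : ℕ} {k : ℤ} (h : (n : ℤ) < k) : GB q n k = 0 := by
  rw [GB, if_neg]; omega

lemma GB_eq (a b : ℕ) : GB q (a + b) (a : ℤ) = Pk q (a + b) / (Pk q a * Pk q b) := by
  rw [GB, if_pos ⟨by positivity, by exact_mod_cast Nat.le_add_right a b⟩]
  norm_num

lemma GB_left (n : ℕ) (hq : ∀ m : ℕ, Pk q m ≠ 0) : GB q n 0 = 1 := by
  have := GB_eq (q := q) 0 n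
  simpa [Pk_zero, div_self (hq n)] using this

lemma GB_right (n : ℕ) (hq : ∀ m : ℕ, Pk q m ≠ 0) : GB q n (n : ℤ) = 1 := by
  have := GB_eq (q := q) n 0
  simpa [Pk_zero, div_self (hq n)] using this

lemma one_sub_ne (hq : ∀ m : ℕ, Pk q m ≠ 0) (a : ℕ) : (1 : ℂ) - q * q ^ a ≠ 0 := by
  intro h0; apply hq (a + 1); rw [Pk_succ, h0, mul_zero]

lemma pascal1 (hq : ∀ m : ℕ, Pk q m ≠ 0) (n : ℕ) (k : ℤ) :
    GB q (n + 1) k = GB q n k + q ^ ((n : ℤ) + 1 - k) * GB q n (k - 1) := by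
  rcases lt_or_ge k 0 with h | h
  · rw [GB_neg h, GB_neg h, GB_neg (show k - 1 < 0 by omega)]; ring
  rcases lt_or_ge ((n : ℤ) + 1) k with h2 | h2
  · rw [GB_gt (show ((n+1 : ℕ) : ℤ) < k by push_cast; omega),
      GB_gt (show (n : ℤ) < k by omega), GB_gt (show (n : ℤ) < k - 1 by omega)]; ring
  rcases eq_or_lt_of_le h with h0 | h0
  · -- k = 0
    rw [← h0, GB_left _ hq, GB_left _ hq, GB_neg (show (0:ℤ) - 1 < 0 by omega)]; ring
  -- 1 ≤ k ≤ n+1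
  obtain ⟨a, rfl⟩ : ∃ a : ℕ, k = ((a : ℤ) + 1) := ⟨(k - 1).toNat, by omega⟩
  have han : a + 1 ≤ n + 1 := by exact_mod_cast (by push_cast at h2 ⊢; omega : ((a:ℤ)+1) ≤ (n:ℤ)+1)
  have hk1 : (a : ℤ) + 1 = ((a + 1 : ℕ) : ℤ) := by push_cast; ring
  have hk2 : (a : ℤ) + 1 - 1 = ((a : ℕ) : ℤ) := by push_cast; ring
  rcases eq_or_lt_of_le han with hb0 | hb0
  · -- k = n + 1
    have hn : n = a := by omega
    subst hn
    rw [hk1, show ((n + 1 : ℕ) : ℤ) - 1 = ((n : ℕ) : ℤ) by push_cast; ring]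
    rw [GB_right (n + 1) hq, GB_right n hq,
      GB_gt (show (n : ℤ) < ((n + 1 : ℕ) : ℤ) by push_cast; omega),
      show ((n + 1 : ℕ) : ℤ) - ((n + 1 : ℕ) : ℤ) = 0 by push_cast; ring, zpow_zero]
    ring
  -- generic: a + 1 ≤ n, write n = (a+1) + b
  obtain ⟨b, hn⟩ : ∃ b, n = (a + 1) + b := ⟨n - (a + 1), by omega⟩
  subst hn
  rw [hk1, show ((a + 1 : ℕ) : ℤ) - 1 = ((a : ℕ) : ℤ) by push_cast; ring]
  rw [show (a + 1 + b) + 1 = (a + 1) + (b + 1) by ring, GB_eq (a + 1) (b + 1)]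
  rw [GB_eq (a + 1) b]
  rw [show (a + 1 + b) = a + (b + 1) by ring, GB_eq a (b + 1)]
  rw [show ((a + (b + 1) : ℕ) : ℤ) + 1 - ((a + 1 : ℕ) : ℤ) = ((b + 1 : ℕ) : ℤ) by
    push_cast; ring, zpow_natCast]
  have e1 : Pk q (a + 1 + (b + 1)) = Pk q (a + (b + 1)) * (1 - q * q ^ (a + b + 1)) := by
    rw [show a + 1 + (b + 1) = (a + (b + 1)) + 1 by ring, Pk_succ]
    ring_nf
  have e2 : Pk q (a + 1) = Pk q a * (1 - q * q ^ a) := Pk_succ a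
  have e3 : Pk q (b + 1) = Pk q b * (1 - q * q ^ b) := Pk_succ b
  rw [e1, e2, e3]
  have h1 := hq a
  have h2 := hq b
  have h3 := one_sub_ne hq a
  have h4 := one_sub_ne hq b
  have h5 := hq (a + (b + 1))
  field_simp
  ring

lemma pascal2 (hq : ∀ m : ℕ, Pk q m ≠ 0) (n : ℕ) (k : ℤ) :
    GB q (n + 1) k = q ^ k * GB q n k + GB q n (k - 1) := by
  rcases lt_or_ge k 0 with h | h
  · rw [GB_neg h, GB_neg h, GB_neg (show k - 1 < 0 by omega)]; ring
  rcases lt_or_ge ((n : ℤ) + 1) k with h2 | h2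
  · rw [GB_gt (show ((n+1 : ℕ) : ℤ) < k by push_cast; omega),
      GB_gt (show (n : ℤ) < k by omega), GB_gt (show (n : ℤ) < k - 1 by omega)]; ring
  rcases eq_or_lt_of_le h with h0 | h0
  · rw [← h0, GB_left _ hq, GB_left _ hq, GB_neg (show (0:ℤ) - 1 < 0 by omega),
      zpow_zero]; ring
  obtain ⟨a, rfl⟩ : ∃ a : ℕ, k = ((a : ℤ) + 1) := ⟨(k - 1).toNat, by omega⟩
  have han : a + 1 ≤ n + 1 := by omega
  have hk1 : (a : ℤ) + 1 = ((a + 1 : ℕ) : ℤ) := by push_cast; ring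
  rcases eq_or_lt_of_le han with hb0 | hb0
  · have hn : n = a := by omega
    subst hn
    rw [hk1, show ((n + 1 : ℕ) : ℤ) - 1 = ((n : ℕ) : ℤ) by push_cast; ring]
    rw [GB_right (n + 1) hq, GB_right n hq,
      GB_gt (show (n : ℤ) < ((n + 1 : ℕ) : ℤ) by push_cast; omega)]
    ring
  obtain ⟨b, hn⟩ : ∃ b, n = (a + 1) + b := ⟨n - (a + 1), by omega⟩
  subst hn
  rw [hk1, show ((a + 1 : ℕ) : ℤ) - 1 = ((a : ℕ) : ℤ) by push_cast; ring]
  rw [show (a + 1 + b) + 1 = (a + 1) + (b + 1) by ring, GB_eq (a + 1) (b + 1)]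
  rw [GB_eq (a + 1) b]
  rw [show (a + 1 + b) = a + (b + 1) by ring, GB_eq a (b + 1)]
  rw [zpow_natCast]
  have e1 : Pk q (a + 1 + (b + 1)) = Pk q (a + (b + 1)) * (1 - q * q ^ (a + b + 1)) := by
    rw [show a + 1 + (b + 1) = (a + (b + 1)) + 1 by ring, Pk_succ]
    ring_nf
  have e2 : Pk q (a + 1) = Pk q a * (1 - q * q ^ a) := Pk_succ a
  have e3 : Pk q (b + 1) = Pk q b * (1 - q * q ^ b) := Pk_succ b
  rw [e1, e2, e3]
  have h1 := hq a
  have h2 := hq b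
  have h3 := one_sub_ne hq a
  have h4 := one_sub_ne hq b
  have h5 := hq (a + (b + 1))
  field_simp
  ring

lemma GBcomb (hq0 : q ≠ 0) (hq : ∀ m : ℕ, Pk q m ≠ 0) (n : ℕ) (k : ℤ) :
    GB q (n + 2) (k + 1) =
      (1 + q ^ ((n : ℤ) + 1)) * GB q n k + q ^ ((n : ℤ) + 1 - k) * GB q n (k - 1)
        + q ^ (k + 1) * GB q n (k + 1) := by
  have p1 := pascal1 hq (n + 1) (k + 1)
  rw [show ((n + 1 : ℕ) : ℤ) + 1 - (k + 1) = (n : ℤ) + 1 - k by push_cast; ring] at p1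
  rw [show n + 2 = (n + 1) + 1 from rfl, p1, pascal2 hq n (k + 1),
    show k + 1 - 1 = k by ring, pascal2 hq n k]
  have hz : q ^ ((n : ℤ) + 1 - k) * q ^ k = q ^ ((n : ℤ) + 1) := by
    rw [← zpow_add₀ hq0]; ring_nf
  linear_combination GB q n k * hz


/-- summand of the theta series -/
def T (q z : ℂ) (m : ℤ) : ℂ := q ^ (m * (m - 1) / 2) * (-z) ^ m

variable {z : ℂ}

lemma T_exp (m : ℤ) : (m + 1) * ((m + 1) - 1) / 2 = m * (m - 1) / 2 + m := by
  have h2 : (m + 1) * ((m + 1) - 1) = m * (m - 1) + m * 2 := by ring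
  rw [h2, Int.add_mul_ediv_right _ _ two_ne_zero]

lemma T_succ (hq0 : q ≠ 0) (hz : z ≠ 0) (m : ℤ) :
    T q z (m + 1) = T q z m * (-z) * q ^ m := by
  have hnz : (-z) ≠ 0 := neg_ne_zero.mpr hz
  rw [T, T, T_exp, zpow_add₀ hq0, zpow_add₀ hnz, zpow_one]
  ring

lemma T_zero : T q z 0 = 1 := by simp [T]

lemma FI (hq0 : q ≠ 0) (hz : z ≠ 0) (hq : ∀ m : ℕ, Pk q m ≠ 0) (N : ℕ) :
    (∏ k ∈ Finset.range N, (1 - z * q ^ k)) * (∏ k ∈ Finset.range N, (1 - (q * z⁻¹) * q ^ k)) =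
      ∑ m ∈ Finset.Icc (-(N : ℤ)) (N : ℤ), T q z m * GB q (2 * N) ((N : ℤ) + m) := by
  induction N with
  | zero => simp [T_zero, GB_left _ hq]
  | succ N ih =>
    have hnz : (-z) ≠ 0 := neg_ne_zero.mpr hz
    set G : ℤ → ℂ := fun j => T q z j * GB q (2 * N) ((N : ℤ) + j) with hG
    -- the three shifted summands
    set Fb : ℤ → ℂ := fun j => T q z (j + 1) * (q ^ ((N : ℤ) - j) * GB q (2 * N) ((N : ℤ) + j))
      with hFb
    set Fc : ℤ → ℂ := fun j => T q z (j - 1) * (q ^ ((N : ℤ) + j) * GB q (2 * N) ((N : ℤ) + j))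
      with hFc
    have hsub : Finset.Icc (-(N : ℤ)) (N : ℤ) ⊆ Finset.Icc (-((N : ℕ) + 1 : ℤ)) ((N : ℕ) + 1 : ℤ) := by
      apply Finset.Icc_subset_Icc <;> omega
    -- Step A : termwise expansion
    have stepA : ∀ m ∈ Finset.Icc (-((N : ℕ) + 1 : ℤ)) ((N : ℕ) + 1 : ℤ),
        T q z m * GB q (2 * (N + 1)) (((N : ℕ) + 1 : ℤ) + m)
          = (1 + q ^ (2 * (N : ℤ) + 1)) * G m + Fb (m - 1) + Fc (m + 1) := by
      intro m _
      have h1 : (((N : ℕ) + 1 : ℤ) + m) = ((N : ℤ) + m) + 1 := by ring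
      have h2 : 2 * (N + 1) = 2 * N + 2 := by ring
      rw [h1, h2, GBcomb hq0 hq (2 * N) ((N : ℤ) + m)]
      rw [show ((2 * N : ℕ) : ℤ) + 1 - ((N : ℤ) + m) = (N : ℤ) - (m - 1) by push_cast; ring]
      rw [show ((N : ℤ) + m) - 1 = (N : ℤ) + (m - 1) by ring]
      rw [show ((N : ℤ) + m) + 1 = (N : ℤ) + (m + 1) by ring]
      rw [show ((2 * N : ℕ) : ℤ) + 1 = 2 * (N : ℤ) + 1 by push_cast; ring]
      simp only [hG, hFb, hFc, show (m - 1) + 1 = m by ring, show (m + 1) - 1 = m by ring]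
      ring
    -- Step B
    have stepB : ∑ m ∈ Finset.Icc (-((N : ℕ) + 1 : ℤ)) ((N : ℕ) + 1 : ℤ), G m
        = ∑ m ∈ Finset.Icc (-(N : ℤ)) (N : ℤ), G m := by
      symm
      apply Finset.sum_subset hsub
      intro m hm hnm
      simp only [Finset.mem_Icc] at hm hnm
      rcases lt_or_ge (N : ℤ) m with h | h
      · simp only [hG, GB_gt (show ((2 * N : ℕ) : ℤ) < (N : ℤ) + m by push_cast; omega), mul_zero]
      · simp only [hG, GB_neg (show (N : ℤ) + m < 0 by omega), mul_zero]
    -- Step C : shifted sums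
    have shiftB : ∑ m ∈ Finset.Icc (-((N : ℕ) + 1 : ℤ)) ((N : ℕ) + 1 : ℤ), Fb (m - 1)
        = ∑ j ∈ Finset.Icc (-(N : ℤ)) (N : ℤ), Fb j := by
      have e1 : (Finset.Icc (-((N : ℕ) + 1 : ℤ)) ((N : ℕ) + 1 : ℤ)).map
          (addRightEmbedding (-1)) = Finset.Icc (-((N : ℕ) : ℤ) - 2) ((N : ℕ) : ℤ) := by
        rw [Finset.map_add_right_Icc]; congr 1 <;> ring
      have e2 : ∑ m ∈ Finset.Icc (-((N : ℕ) + 1 : ℤ)) ((N : ℕ) + 1 : ℤ), Fb (m - 1)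
          = ∑ j ∈ Finset.Icc (-((N : ℕ) : ℤ) - 2) ((N : ℕ) : ℤ), Fb j := by
        rw [← e1, Finset.sum_map]
        apply Finset.sum_congr rfl
        intro m _
        simp [addRightEmbedding, sub_eq_add_neg]
      rw [e2]
      symm
      apply Finset.sum_subset (by apply Finset.Icc_subset_Icc <;> omega)
      intro m hm hnm
      simp only [Finset.mem_Icc] at hm hnm
      simp only [hFb, GB_neg (show (N : ℤ) + m < 0 by omega), mul_zero]
    have shiftC : ∑ m ∈ Finset.Icc (-((N : ℕ) + 1 : ℤ)) ((N : ℕ) + 1 : ℤ), Fc (m + 1)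
        = ∑ j ∈ Finset.Icc (-(N : ℤ)) (N : ℤ), Fc j := by
      have e1 : (Finset.Icc (-((N : ℕ) + 1 : ℤ)) ((N : ℕ) + 1 : ℤ)).map
          (addRightEmbedding 1) = Finset.Icc (-((N : ℕ) : ℤ)) ((N : ℕ) + 2 : ℤ) := by
        rw [Finset.map_add_right_Icc]; congr 1 <;> ring
      have e2 : ∑ m ∈ Finset.Icc (-((N : ℕ) + 1 : ℤ)) ((N : ℕ) + 1 : ℤ), Fc (m + 1)
          = ∑ j ∈ Finset.Icc (-((N : ℕ) : ℤ)) ((N : ℕ) + 2 : ℤ), Fc j := by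
        rw [← e1, Finset.sum_map]
        apply Finset.sum_congr rfl
        intro m _
        simp [addRightEmbedding]
      rw [e2]
      symm
      apply Finset.sum_subset (by apply Finset.Icc_subset_Icc <;> omega)
      intro m hm hnm
      simp only [Finset.mem_Icc] at hm hnm
      simp only [hFc, GB_gt (show ((2 * N : ℕ) : ℤ) < (N : ℤ) + m by push_cast; omega), mul_zero]
    -- termwise identification of Fb, Fc with multiples of G
    have hFbG : ∀ j : ℤ, Fb j = (-(z * q ^ ((N : ℕ) : ℤ))) * G j := by
      intro j
      simp only [hFb, hG, T_succ hq0 hz j]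
      have : q ^ j * q ^ ((N : ℤ) - j) = q ^ ((N : ℕ) : ℤ) := by
        rw [← zpow_add₀ hq0]; congr 1; ring
      calc T q z j * (-z) * q ^ j * (q ^ ((N : ℤ) - j) * GB q (2 * N) ((N : ℤ) + j))
          = (-z) * (q ^ j * q ^ ((N : ℤ) - j)) * (T q z j * GB q (2 * N) ((N : ℤ) + j)) := by ring
        _ = _ := by rw [this]; ring
    have hFcG : ∀ j : ℤ, Fc j = (-(q ^ ((N : ℕ) + 1 : ℤ) * z⁻¹)) * G j := by
      intro j
      have hTj : T q z j = T q z (j - 1) * (-z) * q ^ (j - 1) := by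
        have := T_succ hq0 hz (j - 1)
        rwa [show j - 1 + 1 = j by ring] at this
      simp only [hFc, hG, hTj]
      have h1 : q ^ (j - 1 : ℤ) * q ^ ((N : ℕ) + 1 : ℤ) = q ^ ((N : ℤ) + j) := by
        rw [← zpow_add₀ hq0]; congr 1; push_cast; ring
      rw [← h1]
      have hzz : z⁻¹ * z = 1 := inv_mul_cancel₀ hz
      linear_combination (-(q ^ (j - 1) * q ^ ((N : ℕ) + 1 : ℤ) * T q z (j - 1) *
        GB q (2 * N) ((N : ℤ) + j))) * hzz
    -- assemble
    rw [Finset.prod_range_succ, Finset.prod_range_succ]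
    have hLHS : (∏ k ∈ Finset.range N, (1 - z * q ^ k)) * (1 - z * q ^ N) *
        ((∏ k ∈ Finset.range N, (1 - (q * z⁻¹) * q ^ k)) * (1 - (q * z⁻¹) * q ^ N))
        = ((∏ k ∈ Finset.range N, (1 - z * q ^ k)) *
          (∏ k ∈ Finset.range N, (1 - (q * z⁻¹) * q ^ k))) *
          ((1 - z * q ^ N) * (1 - (q * z⁻¹) * q ^ N)) := by ring
    rw [hLHS, ih]
    have hRHS : ∑ m ∈ Finset.Icc (-((N + 1 : ℕ) : ℤ)) ((N + 1 : ℕ) : ℤ),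
        T q z m * GB q (2 * (N + 1)) (((N + 1 : ℕ) : ℤ) + m)
        = ∑ m ∈ Finset.Icc (-((N : ℕ) + 1 : ℤ)) ((N : ℕ) + 1 : ℤ),
          ((1 + q ^ (2 * (N : ℤ) + 1)) * G m + Fb (m - 1) + Fc (m + 1)) := by
      rw [show ((N + 1 : ℕ) : ℤ) = ((N : ℕ) + 1 : ℤ) by push_cast; ring]
      apply Finset.sum_congr rfl
      intro m hm
      exact stepA m hm
    rw [hRHS]
    rw [Finset.sum_add_distrib, Finset.sum_add_distrib, ← Finset.mul_sum, stepB, shiftB, shiftC]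
    have hb2 : ∑ j ∈ Finset.Icc (-(N : ℤ)) (N : ℤ), Fb j
        = (-(z * q ^ ((N : ℕ) : ℤ))) * ∑ m ∈ Finset.Icc (-(N : ℤ)) (N : ℤ), G m := by
      rw [Finset.mul_sum]; exact Finset.sum_congr rfl fun j _ => hFbG j
    have hc2 : ∑ j ∈ Finset.Icc (-(N : ℤ)) (N : ℤ), Fc j
        = (-(q ^ ((N : ℕ) + 1 : ℤ) * z⁻¹)) * ∑ m ∈ Finset.Icc (-(N : ℤ)) (N : ℤ), G m := by
      rw [Finset.mul_sum]; exact Finset.sum_congr rfl fun j _ => hFcG j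
    rw [hb2, hc2]
    -- now pure algebra in the common factor
    have hQ : q ^ ((N : ℕ) : ℤ) = q ^ N := zpow_natCast q N
    have hQ1 : q ^ ((N : ℕ) + 1 : ℤ) = q ^ N * q := by
      rw [zpow_add₀ hq0, hQ, zpow_one]
    have hQ2 : q ^ (2 * (N : ℤ) + 1) = (q ^ N) * (q ^ N) * q := by
      rw [zpow_add₀ hq0, zpow_one, two_mul, zpow_add₀ hq0, hQ]
    rw [hQ, hQ1, hQ2]
    field_simp
    ring

lemma summable_log (hq1 : ‖q‖ < 1) (hw : ∀ k : ℕ, (1 : ℂ) - w * q ^ k ≠ 0) :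
    Summable (fun k : ℕ => Complex.log (1 - w * q ^ k)) := by
  have hgeo : Summable (fun k : ℕ => (3 / 2 : ℝ) * (‖w‖ * ‖q‖ ^ k)) := by
    apply Summable.mul_left
    apply Summable.mul_left
    exact summable_geometric_of_lt_one (norm_nonneg q) hq1
  apply Summable.of_norm_bounded_eventually_nat hgeo
  have htend : Tendsto (fun k : ℕ => ‖w‖ * ‖q‖ ^ k) atTop (𝓝 0) := by
    have := tendsto_pow_atTop_nhds_zero_of_lt_one (norm_nonneg q) hq1
    simpa using this.const_mul (‖w‖)
  filter_upwards [htend.eventually_le_const (show (0:ℝ) < 1/2 by norm_num)] with k hk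
  have h1 : ‖-(w * q ^ k)‖ ≤ 1 / 2 := by
    simpa [norm_neg, norm_mul, norm_pow] using hk
  have := Complex.norm_log_one_add_half_le_self h1
  rw [show (1 : ℂ) + -(w * q ^ k) = 1 - w * q ^ k by ring] at this
  calc ‖Complex.log (1 - w * q ^ k)‖ ≤ 3 / 2 * ‖-(w * q ^ k)‖ := this
    _ ≤ 3 / 2 * (‖w‖ * ‖q‖ ^ k) := by
        rw [norm_neg]
        simp [norm_mul, norm_pow]

lemma hasProd_of_ne (hq1 : ‖q‖ < 1) (hw : ∀ k : ℕ, (1 : ℂ) - w * q ^ k ≠ 0) :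
    HasProd (fun k : ℕ => 1 - w * q ^ k) (qPochC w q) :=
  (Complex.multipliable_of_summable_log (summable_log hq1 hw)).hasProd

lemma prod_tendsto (hq1 : ‖q‖ < 1) :
    Tendsto (fun N => ∏ k ∈ Finset.range N, (1 - w * q ^ k)) atTop (𝓝 (qPochC w q)) := by
  by_cases hzero : ∀ k : ℕ, (1 : ℂ) - w * q ^ k ≠ 0
  · exact (hasProd_of_ne hq1 hzero).tendsto_prod_nat
  push_neg at hzero
  obtain ⟨k₀, hk₀⟩ := hzero
  have h0 : HasProd (fun k : ℕ => 1 - w * q ^ k) 0 := by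
    rw [HasProd]
    have hev : ∀ᶠ s : Finset ℕ in atTop, ∏ i ∈ s, ((1 : ℂ) - w * q ^ i) = 0 := by
      filter_upwards [Filter.eventually_ge_atTop ({k₀} : Finset ℕ)] with s hs
      exact Finset.prod_eq_zero (hs (Finset.mem_singleton_self k₀)) hk₀
    exact Tendsto.congr' (EventuallyEq.symm hev) tendsto_const_nhds
  rw [show qPochC w q = 0 from h0.tprod_eq]
  have hev : ∀ᶠ N : ℕ in atTop, ∏ k ∈ Finset.range N, ((1 : ℂ) - w * q ^ k) = 0 := by
    filter_upwards [Filter.eventually_ge_atTop (k₀ + 1)] with N hN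
    exact Finset.prod_eq_zero (Finset.mem_range.mpr (by omega)) hk₀
  exact Tendsto.congr' (EventuallyEq.symm hev) tendsto_const_nhds


lemma factor_ne (hq1 : ‖q‖ < 1) (k : ℕ) : (1 : ℂ) - q * q ^ k ≠ 0 := by
  intro h
  have h1 : ‖q * q ^ k‖ < 1 := by
    rw [norm_mul, norm_pow]
    calc ‖q‖ * ‖q‖ ^ k ≤ ‖q‖ * 1 :=
          mul_le_mul_of_nonneg_left (pow_le_one₀ (norm_nonneg q) hq1.le)
            (norm_nonneg q)
      _ < 1 := by rwa [mul_one]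
  have h2 : q * q ^ k = 1 := by linear_combination -h
  rw [h2, norm_one] at h1; exact lt_irrefl 1 h1

lemma Pk_ne (hq1 : ‖q‖ < 1) (m : ℕ) : Pk q m ≠ 0 :=
  Finset.prod_ne_zero_iff.mpr fun k _ => factor_ne hq1 k

lemma Pk_tendsto (hq1 : ‖q‖ < 1) :
    Tendsto (fun n => Pk q n) atTop (𝓝 (qPochC q q)) :=
  prod_tendsto hq1

lemma Pinf_ne (hq1 : ‖q‖ < 1) : qPochC q q ≠ 0 := by
  have h2 := Complex.cexp_tsum_eq_tprod (f := fun k => 1 - q * q ^ k)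
    (factor_ne hq1) (summable_log hq1 (factor_ne hq1))
  rw [qPochC, ← h2]
  exact Complex.exp_ne_zero _

lemma Pk_lower (hq1 : ‖q‖ < 1) :
    ∃ c > 0, ∀ n, c ≤ ‖Pk q n‖ := by
  have habs : Tendsto (fun n => ‖Pk q n‖) atTop (𝓝 (‖qPochC q q‖)) :=
    (continuous_norm.tendsto _).comp (Pk_tendsto hq1)
  have hpos : 0 < ‖qPochC q q‖ := norm_pos_iff.mpr (Pinf_ne hq1)
  obtain ⟨N₀, hN₀⟩ := Filter.eventually_atTop.mp (habs.eventually
    (eventually_gt_nhds (show ‖qPochC q q‖ / 2 < ‖qPochC q q‖ by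
      linarith)))
  have hne : (Finset.range (N₀ + 1)).Nonempty := Finset.nonempty_range_add_one
  set c₁ := (Finset.range (N₀ + 1)).inf' hne (fun n => ‖Pk q n‖) with hc₁
  refine ⟨min (‖qPochC q q‖ / 2) c₁, lt_min (by linarith) ?_, ?_⟩
  · rw [hc₁, Finset.lt_inf'_iff]
    intro n _
    exact norm_pos_iff.mpr (Pk_ne hq1 n)
  · intro n
    rcases le_or_gt n N₀ with h | h
    · exact le_trans (min_le_right _ _)
        (Finset.inf'_le _ (Finset.mem_range.mpr (by omega)))
    · exact le_trans (min_le_left _ _) (hN₀ n (by omega)).le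

lemma Pk_upper (hq1 : ‖q‖ < 1) :
    ∃ M, ∀ n, ‖Pk q n‖ ≤ M := by
  have habs : Tendsto (fun n => ‖Pk q n‖) atTop (𝓝 (‖qPochC q q‖)) :=
    (continuous_norm.tendsto _).comp (Pk_tendsto hq1)
  obtain ⟨M, hM⟩ := habs.bddAbove_range
  exact ⟨M, fun n => hM ⟨n, rfl⟩⟩

lemma GB_bound (hq1 : ‖q‖ < 1) {c M : ℝ} (hc : 0 < c)
    (hcl : ∀ n, c ≤ ‖Pk q n‖) (hM : ∀ n, ‖Pk q n‖ ≤ M)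
    (n : ℕ) (k : ℤ) : ‖GB q n k‖ ≤ M / (c * c) := by
  have hM0 : 0 < M := lt_of_lt_of_le (lt_of_lt_of_le hc (hcl 0)) (hM 0)
  rw [GB]
  split_ifs with h
  · rw [norm_div, norm_mul]
    apply div_le_div₀ hM0.le (hM n) (by positivity)
    exact mul_le_mul (hcl _) (hcl _) hc.le (norm_nonneg _)
  · simp only [norm_zero]
    positivity

lemma T_abs_succ (hq0 : q ≠ 0) (hz : z ≠ 0) (m : ℤ) :
    ‖T q z (m + 1)‖
      = ‖T q z m‖ * (‖z‖ * ‖q‖ ^ m) := by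
  rw [T_succ hq0 hz, norm_mul, norm_mul, norm_neg, norm_zpow]
  ring

lemma summable_T_abs (hq0 : q ≠ 0) (hq1 : ‖q‖ < 1) (hz : z ≠ 0) :
    Summable (fun m : ℤ => ‖T q z m‖) := by
  have azpos : 0 < ‖z‖ := norm_pos_iff.mpr hz
  have aqpos : 0 < ‖q‖ := norm_pos_iff.mpr hq0
  have hnn : ∀ m : ℤ, 0 ≤ ‖T q z m‖ := fun m => norm_nonneg _
  apply Summable.of_nat_of_neg
  · apply summable_of_ratio_norm_eventually_le (r := 1/2) (by norm_num)
    have htend : Tendsto (fun n : ℕ => ‖z‖ * ‖q‖ ^ n) atTop (𝓝 0) := by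
      have := tendsto_pow_atTop_nhds_zero_of_lt_one (norm_nonneg q) hq1
      simpa using this.const_mul (‖z‖)
    filter_upwards [htend.eventually_le_const (show (0:ℝ) < 1/2 by norm_num)] with n hn
    have hk := T_abs_succ (z := z) hq0 hz (n : ℤ)
    rw [zpow_natCast] at hk
    rw [Real.norm_eq_abs, Real.norm_eq_abs, abs_of_nonneg (hnn _), abs_of_nonneg (hnn _)]
    rw [show ((n : ℤ) + 1) = ((n + 1 : ℕ) : ℤ) by push_cast; ring] at hk
    rw [hk, mul_comm]
    exact mul_le_mul_of_nonneg_right hn (hnn _)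
  · apply summable_of_ratio_norm_eventually_le (r := 1/2) (by norm_num)
    have htend : Tendsto (fun n : ℕ => ‖q‖ ^ (n + 1) / ‖z‖) atTop (𝓝 0) := by
      have h1 := tendsto_pow_atTop_nhds_zero_of_lt_one (norm_nonneg q) hq1
      have h2 := (h1.const_mul (‖q‖ * (‖z‖)⁻¹))
      rw [mul_zero] at h2
      apply h2.congr
      intro n
      rw [div_eq_mul_inv, pow_succ]
      ring
    filter_upwards [htend.eventually_le_const (show (0:ℝ) < 1/2 by norm_num)] with n hn
    have hk := T_abs_succ (z := z) hq0 hz (-(n : ℤ) - 1)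
    rw [show -(n : ℤ) - 1 + 1 = -(n : ℤ) by ring] at hk
    have hzp : ‖q‖ ^ (-(n : ℤ) - 1) = (‖q‖ ^ (n + 1 : ℕ))⁻¹ := by
      rw [show -(n : ℤ) - 1 = -((n + 1 : ℕ) : ℤ) by push_cast; ring, zpow_neg, zpow_natCast]
    rw [hzp] at hk
    have habs : ‖T q z (-((n + 1 : ℕ) : ℤ))‖
        = ‖T q z (-(n : ℤ))‖ * (‖q‖ ^ (n + 1 : ℕ) / ‖z‖) := by
      rw [show -((n + 1 : ℕ) : ℤ) = -(n : ℤ) - 1 by push_cast; ring]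
      field_simp at hk ⊢
      linarith [hk]
    rw [Real.norm_eq_abs, Real.norm_eq_abs, abs_of_nonneg (hnn _), abs_of_nonneg (hnn _)]
    rw [habs, mul_comm]
    exact mul_le_mul_of_nonneg_right hn (hnn _)

lemma GB_pt (hq1 : ‖q‖ < 1) (m : ℤ) :
    Tendsto (fun N : ℕ => qPochC q q * GB q (2 * N) ((N : ℤ) + m)) atTop (𝓝 1) := by
  have hPne := Pinf_ne hq1
  have t1 : Tendsto (fun N : ℕ => 2 * N) atTop atTop :=
    tendsto_atTop_atTop.mpr fun b => ⟨b, fun a ha => by omega⟩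
  have t2 : Tendsto (fun N : ℕ => ((N : ℤ) + m).toNat) atTop atTop :=
    tendsto_atTop_atTop.mpr fun b => ⟨b + m.natAbs, fun a ha => by omega⟩
  have t3 : Tendsto (fun N : ℕ => 2 * N - ((N : ℤ) + m).toNat) atTop atTop :=
    tendsto_atTop_atTop.mpr fun b => ⟨b + m.natAbs, fun a ha => by omega⟩
  have l1 := (Pk_tendsto hq1).comp t1
  have l2 := (Pk_tendsto hq1).comp t2
  have l3 := (Pk_tendsto hq1).comp t3
  have l4 := (l1.div (l2.mul l3) (mul_ne_zero hPne hPne)).const_mul (qPochC q q)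
  have hval : qPochC q q * (qPochC q q / (qPochC q q * qPochC q q)) = 1 := by
    field_simp
  rw [hval] at l4
  apply l4.congr'
  filter_upwards [Filter.eventually_ge_atTop m.natAbs] with N hN
  have hmem : 0 ≤ (N : ℤ) + m ∧ (N : ℤ) + m ≤ ((2 * N : ℕ) : ℤ) := by
    constructor <;> [omega; (push_cast; omega)]
  rw [GB, if_pos hmem]
  simp only [Function.comp, Pi.div_apply]

end JTP

open JTP Filter in
/-- Jacobi triple product identity. -/
theorem jacobi_triple_product (q z : ℂ) (hq0 : 0 < ‖q‖)
    (hq1 : ‖q‖ < 1) (hz : z ≠ 0) :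
    qPochC z q * qPochC (q * z⁻¹) q * qPochC q q =
      ∑' m : ℤ, q ^ (m * (m - 1) / 2) * (-z) ^ m := by
  have hq0' : q ≠ 0 := by
    intro h; rw [h] at hq0; simp at hq0
  have hqPk := Pk_ne hq1
  obtain ⟨c, hc, hcl⟩ := Pk_lower hq1
  obtain ⟨M, hM⟩ := Pk_upper hq1
  have habsT := summable_T_abs (z := z) hq0' hq1 hz
  set f : ℕ → ℤ → ℂ := fun N m => T q z m * (qPochC q q * GB q (2 * N) ((N : ℤ) + m)) with hf
  have hbnd : Summable (fun m : ℤ =>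
      (‖qPochC q q‖ * (M / (c * c))) * ‖T q z m‖) :=
    habsT.mul_left _
  have htends : Tendsto (fun N => ∑' m : ℤ, f N m) atTop (𝓝 (∑' m : ℤ, T q z m)) := by
    apply tendsto_tsum_of_dominated_convergence hbnd
    · intro m
      have h1 := (GB_pt hq1 m).const_mul (T q z m)
      rwa [mul_one] at h1
    · apply Eventually.of_forall
      intro N m
      simp only [hf, norm_mul]
      calc ‖T q z m‖ * (‖qPochC q q‖
            * ‖GB q (2 * N) ((N : ℤ) + m)‖)
          ≤ ‖T q z m‖ * (‖qPochC q q‖ * (M / (c * c))) := by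
            apply mul_le_mul_of_nonneg_left _ (norm_nonneg _)
            exact mul_le_mul_of_nonneg_left
              (GB_bound hq1 hc hcl hM (2 * N) ((N : ℤ) + m)) (norm_nonneg _)
        _ = ‖qPochC q q‖ * (M / (c * c)) * ‖T q z m‖ := by ring
  have heq : ∀ N : ℕ, ∑' m : ℤ, f N m =
      ((∏ k ∈ Finset.range N, (1 - z * q ^ k)) *
        (∏ k ∈ Finset.range N, (1 - (q * z⁻¹) * q ^ k))) * qPochC q q := by
    intro N
    rw [tsum_eq_sum (s := Finset.Icc (-(N : ℤ)) (N : ℤ)) ?_]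
    · rw [FI hq0' hz hqPk N, Finset.sum_mul]
      apply Finset.sum_congr rfl
      intro m _
      simp only [hf]; ring
    · intro m hm
      simp only [Finset.mem_Icc] at hm
      simp only [hf]
      rcases lt_or_ge (N : ℤ) m with h | h
      · rw [GB_gt (show ((2 * N : ℕ) : ℤ) < (N : ℤ) + m by push_cast; omega)]; ring
      · rw [GB_neg (show (N : ℤ) + m < 0 by omega)]; ring
  have htendL : Tendsto (fun N : ℕ => ((∏ k ∈ Finset.range N, (1 - z * q ^ k)) *
      (∏ k ∈ Finset.range N, (1 - (q * z⁻¹) * q ^ k))) * qPochC q q) atTop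
      (𝓝 (qPochC z q * qPochC (q * z⁻¹) q * qPochC q q)) :=
    ((prod_tendsto hq1).mul (prod_tendsto hq1)).mul_const _
  exact tendsto_nhds_unique htendL (Tendsto.congr heq htends)


end
end

section
/- Dual vertex–face correspondence: suppose for s = 1, 2 and each relevant a ∈ P the dual intertwining covectors t*(v_s) satisfy the biorthogonality relations Σ_{ν} t*_ν(v_s)^{a−ε̄_μ}_a t^ν(v_s)^a_{a−ε̄_λ} = δ_{μλ} and Σ_{μ} t^ν(v_s)^a_{a−ε̄_μ} t*_{ν'}(v_s)^{a−ε̄_μ}_a = δ^ν_{ν'}. Then for every admissible chain a → b → c and the vertex–face correspondence R(v₁−v₂)(t(v₁)_a^d ⊗ t(v₂)_d^c) = Σ_b t(v₁)_b^c ⊗ t(v₂)_a^b W[c,d;b,a|v₁−v₂], one has (t*(v₁)^b_c ⊗ t*(v₂)^a_b) R(v₁−v₂) = Σ_d W[c,d;b,a | v₁−v₂] · t*(v₁)^a_d ⊗ t*(v₂)^d_c, the sum running over the finitely many d ∈ P with (a,d) and (d,c) admissible. -/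
noncomputable section

/-- `Θ_q(z) = (z;q)_∞ (q z⁻¹;q)_∞ (q;q)_∞`. -/
def thetaC (q z : ℂ) : ℂ := qPochC z q * qPochC (q * z⁻¹) q * qPochC q q

/-- The elliptic symbol `[v] = x^(v²/r - v) Θ_{x^{2r}}(x^{2v})`. -/
def ebrk (x r : ℝ) (v : ℂ) : ℂ :=
  (x : ℂ) ^ (v ^ 2 / (r : ℂ) - v) * thetaC ((x : ℂ) ^ (((2 * r : ℝ)) : ℂ)) ((x : ℂ) ^ (2 * v))

/-- Jacobi theta function with characteristics `a`, `b`. -/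
def jTheta (a b : ℝ) (v τ : ℂ) : ℂ :=
  ∑' m : ℤ, Complex.exp ((Real.pi : ℂ) * Complex.I * ((m : ℂ) + (a : ℂ)) *
    (((m : ℂ) + (a : ℂ)) * τ + 2 * (v + (b : ℂ))))

/-- `ε̄_μ = ε_μ - (1/n) Σ_ν ε_ν`, as a vector in `ℝⁿ` (coordinates in the
orthonormal basis `ε_0, …, ε_{n-1}`). -/
def ebar (n : ℕ) (μ : Fin n) : Fin n → ℝ := fun j => (if j = μ then 1 else 0) - 1 / n

/-- The weight lattice `P = ⊕_μ ℤ ε̄_μ` of `A^{(1)}_{n-1}`, as a subset of `ℝⁿ`. -/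
def PLat (n : ℕ) : Set (Fin n → ℝ) :=
  {v | ∃ c : Fin n → ℤ, v = ∑ μ, (c μ : ℝ) • ebar n μ}

/-- The fundamental weight `ω_m = ε̄_0 + ⋯ + ε̄_{m-1}` (with `ω_0 = 0`). -/
def omegaw (n m : ℕ) : Fin n → ℝ :=
  ∑ ν ∈ Finset.univ.filter (fun ν : Fin n => (ν : ℕ) < m), ebar n ν

/-- `ρ = ω_1 + ⋯ + ω_{n-1}`. -/
def rhoWt (n : ℕ) : Fin n → ℝ := ∑ m ∈ Finset.Icc 1 (n - 1), omegaw n m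

/-- `ā_μ = ⟨a + ρ, ε_μ⟩`. -/
def abar (n : ℕ) (a : Fin n → ℝ) (μ : Fin n) : ℝ := a μ + rhoWt n μ

/-- The double infinite product `{z} = (z; x^{2r}, x^{2n})_∞`. -/
def dPoch (x r : ℝ) (n : ℕ) (z : ℂ) : ℂ :=
  ∏' p : ℕ × ℕ, (1 - z * (x : ℂ) ^ (((2 * r * p.1 + 2 * n * p.2 : ℝ)) : ℂ))

/-- `g₁(z) = {x^{2n+2r-2}z}{x²z} / ({x^{2n}z}{x^{2r}z})`. -/
def gOne (x r : ℝ) (n : ℕ) (z : ℂ) : ℂ :=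
  dPoch x r n ((x : ℂ) ^ (((2 * n + 2 * r - 2 : ℝ)) : ℂ) * z) *
      dPoch x r n ((x : ℂ) ^ (2 : ℕ) * z) /
    (dPoch x r n ((x : ℂ) ^ (((2 * (n : ℝ) : ℝ)) : ℂ) * z) *
      dPoch x r n ((x : ℂ) ^ (((2 * r : ℝ)) : ℂ) * z))

/-- `r₁(v) = z^{((r-1)/r)((n-1)/n)} g₁(z⁻¹)/g₁(z)` with `z = x^{2v}`. -/
def rOne (x r : ℝ) (n : ℕ) (v : ℂ) : ℂ :=
  ((x : ℂ) ^ (2 * v)) ^ (((((r - 1) / r) * (((n : ℝ) - 1) / n) : ℝ)) : ℂ) *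
    gOne x r n (((x : ℂ) ^ (2 * v))⁻¹) / gOne x r n ((x : ℂ) ^ (2 * v))

open scoped Classical in
/-- The Boltzmann weight `W[c,d;b,a|v]` of the `A^{(1)}_{n-1}` face model: zero unless
the four pairs `(a,b), (a,d), (b,c), (d,c)` are admissible, and on admissible
configurations given by the three elliptic formulas of the model. -/
def faceW (x r : ℝ) (n : ℕ) (v : ℂ) (c d b a : Fin n → ℝ) : ℂ :=
  if _ : ∃ μ : Fin n, d = a + ebar n μ ∧ b = a + ebar n μ ∧ c = a + ebar n μ + ebar n μ then
    rOne x r n v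
  else if h2 : ∃ p : Fin n × Fin n, p.1 ≠ p.2 ∧ d = a + ebar n p.1 ∧ b = a + ebar n p.2 ∧
      c = a + ebar n p.1 + ebar n p.2 then
    -(rOne x r n v) * ebrk x r v *
        ebrk x r (((abar n a h2.choose.1 - abar n a h2.choose.2 : ℝ) : ℂ) + 1) /
      (ebrk x r (1 - v) * ebrk x r ((abar n a h2.choose.1 - abar n a h2.choose.2 : ℝ) : ℂ))
  else if h3 : ∃ p : Fin n × Fin n, p.1 ≠ p.2 ∧ d = a + ebar n p.1 ∧ b = a + ebar n p.1 ∧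
      c = a + ebar n p.1 + ebar n p.2 then
    rOne x r n v * ebrk x r 1 *
        ebrk x r (v + ((abar n a h3.choose.1 - abar n a h3.choose.2 : ℝ) : ℂ)) /
      (ebrk x r (1 - v) * ebrk x r ((abar n a h3.choose.1 - abar n a h3.choose.2 : ℝ) : ℂ))
  else 0


open scoped Kronecker

/-- `ω = exp(2π√-1/n)`. -/
def omC (n : ℕ) : ℂ := Complex.exp (2 * (Real.pi : ℂ) * Complex.I / (n : ℂ))

/-- The diagonal matrix `g v_i = ω^i v_i`. -/
def gmat (n : ℕ) : Matrix (ZMod n) (ZMod n) ℂ :=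
  Matrix.diagonal fun i => omC n ^ i.val

/-- The shift matrix `h v_i = v_{i-1}`. -/
def hmat (n : ℕ) : Matrix (ZMod n) (ZMod n) ℂ :=
  Matrix.of fun i j => if i = j - 1 then 1 else 0

/-- `I_α = g^{α₁} h^{α₂}`. -/
def Imat (n : ℕ) [NeZero n] (α : ZMod n × ZMod n) : Matrix (ZMod n) (ZMod n) ℂ :=
  gmat n ^ α.1.val * hmat n ^ α.2.val

/-- Belavin's `R̄`-matrix. -/
def Rbar (n : ℕ) [NeZero n] (ε r : ℝ) (v : ℂ) :
    Matrix (ZMod n × ZMod n) (ZMod n × ZMod n) ℂ :=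
  ((n : ℂ))⁻¹ • ∑ α : ZMod n × ZMod n,
    (jTheta (1 / 2 - (α.1.val : ℝ) / n) (1 / 2 + (α.2.val : ℝ) / n)
        (1 / ((n : ℂ) * (r : ℂ)) - v / (r : ℂ)) ((Real.pi : ℂ) * Complex.I / ((ε : ℂ) * (r : ℂ))) /
      jTheta (1 / 2 - (α.1.val : ℝ) / n) (1 / 2 + (α.2.val : ℝ) / n)
        (1 / ((n : ℂ) * (r : ℂ))) ((Real.pi : ℂ) * Complex.I / ((ε : ℂ) * (r : ℂ)))) •
    (Imat n α ⊗ₖ (Imat n α)⁻¹)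

/-- Belavin's `R`-matrix in the principal regime: `R(v) = ([1]/[1-v]) r₁(v) R̄(v)`. -/
def Rfull (n : ℕ) [NeZero n] (x ε r : ℝ) (v : ℂ) :
    Matrix (ZMod n × ZMod n) (ZMod n × ZMod n) ℂ :=
  (ebrk x r 1 / ebrk x r (1 - v) * rOne x r n v) • Rbar n ε r v

/-- The intertwining vector `t(v)^a_{a-ε̄_μ} ∈ ℂⁿ`, with `ν`-th component
`ϑ[0; 1/2+ν/n](v/(nr) + ā_μ/r; π√-1/(nεr))`. -/
def tvec (n : ℕ) (ε r : ℝ) (v : ℂ) (a : Fin n → ℝ) (μ : Fin n) : ZMod n → ℂ :=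
  fun ν => jTheta 0 (1 / 2 + (ν.val : ℝ) / n)
    (v / ((n : ℂ) * (r : ℂ)) + ((abar n a μ / r : ℝ) : ℂ))
    ((Real.pi : ℂ) * Complex.I / ((n : ℂ) * (ε : ℂ) * (r : ℂ)))

open scoped Classical in
/-- The intertwining vector `t(v)_b^c` for a step from `b` up to `c`; it equals
`t(v)^c_{c-ε̄_κ}` when `c = b + ε̄_κ` is admissible, and `0` otherwise. -/
def tUp (n : ℕ) (ε r : ℝ) (v : ℂ) (b c : Fin n → ℝ) : ZMod n → ℂ :=
  if h : ∃ κ : Fin n, c = b + ebar n κ then tvec n ε r v c h.choose else 0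


section DVFHelpers

lemma ebar_inj (n : ℕ) {μ κ : Fin n} (h : ebar n μ = ebar n κ) : μ = κ := by
  by_contra hne
  have h1 := congrFun h μ
  simp [ebar, Ne.symm hne, hne] at h1

lemma plat_add {n : ℕ} {u w : Fin n → ℝ} (hu : u ∈ PLat n) (hw : w ∈ PLat n) :
    u + w ∈ PLat n := by
  obtain ⟨c, rfl⟩ := hu; obtain ⟨d, rfl⟩ := hw
  exact ⟨c + d, by simp [add_smul, Finset.sum_add_distrib]⟩

lemma plat_sub {n : ℕ} {u w : Fin n → ℝ} (hu : u ∈ PLat n) (hw : w ∈ PLat n) :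
    u - w ∈ PLat n := by
  obtain ⟨c, rfl⟩ := hu; obtain ⟨d, rfl⟩ := hw
  refine ⟨c - d, ?_⟩
  simp [sub_smul, Finset.sum_sub_distrib]

lemma ebar_mem (n : ℕ) (μ : Fin n) : ebar n μ ∈ PLat n := by
  refine ⟨fun ν => if ν = μ then 1 else 0, ?_⟩
  simp [ite_smul, apply_ite]

lemma ebar_step_inj (n : ℕ) (b : Fin n → ℝ) {κ κ' : Fin n}
    (h : b + ebar n κ = b + ebar n κ') : κ = κ' :=
  ebar_inj n (add_left_cancel h)

lemma sum_swap_factor {γ : Type*} [Fintype γ] {n : ℕ} [NeZero n]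
    (f g : ZMod n → ℂ) (X Y : γ → ZMod n → ℂ) (Z : γ → ℂ) :
    (∑ q : ZMod n × ZMod n, (f q.1 * g q.2) * ∑ c : γ, X c q.1 * Y c q.2 * Z c)
      = ∑ c : γ, (∑ a : ZMod n, f a * X c a) * ((∑ b : ZMod n, g b * Y c b) * Z c) := by
  rw [Fintype.sum_prod_type]
  simp only [Finset.mul_sum]
  rw [Finset.sum_congr rfl fun a _ => Finset.sum_comm]
  rw [Finset.sum_comm]
  refine Finset.sum_congr rfl fun c _ => ?_
  rw [Finset.sum_mul]
  refine Finset.sum_congr rfl fun a _ => ?_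
  rw [Finset.sum_mul, Finset.mul_sum]
  refine Finset.sum_congr rfl fun b _ => ?_
  ring

end DVFHelpers

open scoped Classical in
/-- Dual vertex–face correspondence: if the dual intertwining covectors `t*(v_s)` are
biorthogonal to the intertwining vectors `t(v_s)` for `s = 1, 2`, then, given the
vertex–face correspondence, for every admissible chain `a → b = a+ε̄_μ₀ → c = b+ε̄_κ₀`
one has `(t*(v₁)^b_c ⊗ t*(v₂)^a_b) R(v₁-v₂) = Σ_d W[c,d;b,a|v₁-v₂] t*(v₁)^a_d ⊗ t*(v₂)^d_c`,
the sum being over `d = a + ε̄_λ` (non-admissible `(d,c)` contribute `0`). -/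
theorem dual_vertex_face_correspondence (n : ℕ) [NeZero n] (hn : 2 ≤ n) (ε x r : ℝ)
    (hε : 0 < ε) (hx : x = Real.exp (-ε)) (hr : (n : ℝ) - 1 < r) (v₁ v₂ : ℂ)
    (tstar : ℂ → (Fin n → ℝ) → Fin n → ZMod n → ℂ)
    (hbi1 : ∀ s : ℂ, (s = v₁ ∨ s = v₂) → ∀ a ∈ PLat n, ∀ μ lam : Fin n,
      ∑ ν : ZMod n, tstar s a μ ν * tvec n ε r s a lam ν = if μ = lam then 1 else 0)
    (hbi2 : ∀ s : ℂ, (s = v₁ ∨ s = v₂) → ∀ a ∈ PLat n, ∀ ν ν' : ZMod n,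
      ∑ μ : Fin n, tvec n ε r s a μ ν * tstar s a μ ν' = if ν = ν' then 1 else 0)
    (hVF : ∀ a ∈ PLat n, ∀ lam lam' : Fin n,
      (Rfull n x ε r (v₁ - v₂)).mulVec
          (fun p => tvec n ε r v₁ (a + ebar n lam) lam p.1 *
            tvec n ε r v₂ (a + ebar n lam + ebar n lam') lam' p.2) =
        fun p => ∑ μ : Fin n,
          tUp n ε r v₁ (a + ebar n μ) (a + ebar n lam + ebar n lam') p.1 *
            tvec n ε r v₂ (a + ebar n μ) μ p.2 *
            faceW x r n (v₁ - v₂) (a + ebar n lam + ebar n lam') (a + ebar n lam)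
              (a + ebar n μ) a)
    (a : Fin n → ℝ) (ha : a ∈ PLat n) (μ₀ κ₀ : Fin n) :
    Matrix.vecMul
        (fun p => tstar v₁ (a + ebar n μ₀ + ebar n κ₀) κ₀ p.1 *
          tstar v₂ (a + ebar n μ₀) μ₀ p.2)
        (Rfull n x ε r (v₁ - v₂)) =
      fun p => ∑ lam : Fin n,
        faceW x r n (v₁ - v₂) (a + ebar n μ₀ + ebar n κ₀) (a + ebar n lam)
            (a + ebar n μ₀) a *
          (tstar v₁ (a + ebar n lam) lam p.1 *
            (if h : ∃ κ : Fin n, a + ebar n μ₀ + ebar n κ₀ = a + ebar n lam + ebar n κ then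
              tstar v₂ (a + ebar n μ₀ + ebar n κ₀) h.choose p.2
            else 0)) := by
  classical
  set c0 : Fin n → ℝ := a + ebar n μ₀ + ebar n κ₀ with hc0def
  set b0 : Fin n → ℝ := a + ebar n μ₀ with hb0def
  have hb0m : b0 ∈ PLat n := by rw [hb0def]; exact plat_add ha (ebar_mem n μ₀)
  have hc0m : c0 ∈ PLat n := by rw [hc0def]; exact plat_add hb0m (ebar_mem n κ₀)
  have hsubm : ∀ κ : Fin n, c0 - ebar n κ ∈ PLat n :=
    fun κ => plat_sub hc0m (ebar_mem n κ)
  set R := Rfull n x ε r (v₁ - v₂) with hRdef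
  set Φ : Matrix (ZMod n × ZMod n) (Fin n × Fin n) ℂ :=
    Matrix.of (fun p j => tvec n ε r v₁ (c0 - ebar n j.1) j.2 p.1 *
      tvec n ε r v₂ c0 j.1 p.2) with hPhi
  set Ψ : Matrix (Fin n × Fin n) (ZMod n × ZMod n) ℂ :=
    Matrix.of (fun j p => tstar v₁ (c0 - ebar n j.1) j.2 p.1 *
      tstar v₂ c0 j.1 p.2) with hPsi
  have hΦΨ : Φ * Ψ = 1 := by
    ext p' p
    rw [Matrix.mul_apply, Fintype.sum_prod_type]
    have step1 : ∀ κ : Fin n, ∑ μ : Fin n, Φ p' (κ, μ) * Ψ (κ, μ) p =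
        (if p'.1 = p.1 then 1 else 0) *
          (tvec n ε r v₂ c0 κ p'.2 * tstar v₂ c0 κ p.2) := by
      intro κ
      rw [← hbi2 v₁ (Or.inl rfl) (c0 - ebar n κ) (hsubm κ) p'.1 p.1, Finset.sum_mul]
      refine Finset.sum_congr rfl fun μ _ => ?_
      simp only [hPhi, hPsi, Matrix.of_apply]
      ring
    rw [Finset.sum_congr rfl fun κ _ => step1 κ, ← Finset.mul_sum,
      hbi2 v₂ (Or.inr rfl) c0 hc0m p'.2 p.2, Matrix.one_apply]
    by_cases h1 : p'.1 = p.1 <;> by_cases h2 : p'.2 = p.2 <;>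
      simp [Prod.ext_iff, h1, h2]
  have himp : ∀ μ κ : Fin n, (a + ebar n μ + ebar n κ = c0) →
      c0 - ebar n κ - ebar n μ = a := by
    intro μ κ hcond; rw [← hcond]; abel
  have key : Matrix.vecMul
      (fun p => tstar v₁ c0 κ₀ p.1 * tstar v₂ b0 μ₀ p.2) (R * Φ) =
      fun j : Fin n × Fin n =>
        if a + ebar n j.2 + ebar n j.1 = c0
        then faceW x r n (v₁ - v₂) c0 (c0 - ebar n j.1) b0 a else 0 := by
    funext j
    obtain ⟨κ, μ⟩ := j
    have ham : c0 - ebar n κ - ebar n μ ∈ PLat n := plat_sub (hsubm κ) (ebar_mem n μ)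
    have h1 : (c0 - ebar n κ - ebar n μ) + ebar n μ = c0 - ebar n κ := by abel
    have h2 : (c0 - ebar n κ - ebar n μ) + ebar n μ + ebar n κ = c0 := by abel
    have hVFi := hVF _ ham μ κ
    rw [h2, h1] at hVFi
    have hrep : ∀ q : ZMod n × ZMod n, (R * Φ) q (κ, μ) = ∑ μ' : Fin n,
        tUp n ε r v₁ (c0 - ebar n κ - ebar n μ + ebar n μ') c0 q.1 *
          tvec n ε r v₂ (c0 - ebar n κ - ebar n μ + ebar n μ') μ' q.2 *
          faceW x r n (v₁ - v₂) c0 (c0 - ebar n κ)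
            (c0 - ebar n κ - ebar n μ + ebar n μ') (c0 - ebar n κ - ebar n μ) := by
      intro q
      have hq := congrFun hVFi q
      simp only [Matrix.mulVec, dotProduct] at hq
      rw [Matrix.mul_apply]
      simp only [hPhi, Matrix.of_apply]
      exact hq
    simp only [Matrix.vecMul, dotProduct, hrep]
    rw [sum_swap_factor (tstar v₁ c0 κ₀) (tstar v₂ b0 μ₀)
      (fun μ' q1 => tUp n ε r v₁ (c0 - ebar n κ - ebar n μ + ebar n μ') c0 q1)
      (fun μ' q2 => tvec n ε r v₂ (c0 - ebar n κ - ebar n μ + ebar n μ') μ' q2)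
      (fun μ' => faceW x r n (v₁ - v₂) c0 (c0 - ebar n κ)
        (c0 - ebar n κ - ebar n μ + ebar n μ') (c0 - ebar n κ - ebar n μ))]
    have hterm : ∀ μ' : Fin n,
        (∑ q1 : ZMod n, tstar v₁ c0 κ₀ q1 *
            tUp n ε r v₁ (c0 - ebar n κ - ebar n μ + ebar n μ') c0 q1) *
          ((∑ q2 : ZMod n, tstar v₂ b0 μ₀ q2 *
            tvec n ε r v₂ (c0 - ebar n κ - ebar n μ + ebar n μ') μ' q2) *
            faceW x r n (v₁ - v₂) c0 (c0 - ebar n κ)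
              (c0 - ebar n κ - ebar n μ + ebar n μ') (c0 - ebar n κ - ebar n μ))
        = if (a + ebar n μ + ebar n κ = c0 ∧ μ' = μ₀)
          then faceW x r n (v₁ - v₂) c0 (c0 - ebar n κ) b0 a else 0 := by
      intro μ'
      by_cases hup : ∃ κ'' : Fin n,
          c0 = (c0 - ebar n κ - ebar n μ + ebar n μ') + ebar n κ''
      · have hch := hup.choose_spec
        simp only [tUp, dif_pos hup]
        rw [hbi1 v₁ (Or.inl rfl) c0 hc0m κ₀ hup.choose]
        by_cases hkk : κ₀ = hup.choose
        · have hch' := hch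
          rw [← hkk] at hch'
          have hB : c0 - ebar n κ - ebar n μ + ebar n μ' = b0 :=
            add_right_cancel (hch'.symm.trans hc0def)
          have hA2 : (∑ q2 : ZMod n, tstar v₂ b0 μ₀ q2 *
              tvec n ε r v₂ (c0 - ebar n κ - ebar n μ + ebar n μ') μ' q2)
              = if μ₀ = μ' then 1 else 0 := by
            rw [hB]; exact hbi1 v₂ (Or.inr rfl) b0 hb0m μ₀ μ'
          rw [hA2, if_pos hkk]
          by_cases hmu : μ' = μ₀
          · have hBa : c0 - ebar n κ - ebar n μ + ebar n μ' = a + ebar n μ₀ :=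
              hB.trans hb0def
            have hA : c0 - ebar n κ - ebar n μ = a := by
              have hBa' := hBa
              rw [hmu] at hBa'
              exact add_right_cancel hBa'
            have hcond : a + ebar n μ + ebar n κ = c0 := by rw [← hA]; abel
            have hFW : faceW x r n (v₁ - v₂) c0 (c0 - ebar n κ)
                (c0 - ebar n κ - ebar n μ + ebar n μ') (c0 - ebar n κ - ebar n μ)
                = faceW x r n (v₁ - v₂) c0 (c0 - ebar n κ) b0 a := by
              rw [hB, hA]
            rw [hFW, if_pos hmu.symm, if_pos ⟨hcond, hmu⟩]
            ring
          · rw [if_neg (fun h => hmu h.symm), if_neg (fun h => hmu h.2)]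
            ring
        · rw [if_neg hkk]
          have hnc : ¬(a + ebar n μ + ebar n κ = c0 ∧ μ' = μ₀) := by
            rintro ⟨hcond, rfl⟩
            apply hkk
            have e2 : c0 - ebar n κ - ebar n μ + ebar n μ' = b0 := by
              rw [himp μ κ hcond, hb0def]
            have e4 : c0 - ebar n κ - ebar n μ + ebar n μ' + ebar n hup.choose =
                b0 + ebar n hup.choose :=
              congrArg (fun z => z + ebar n hup.choose) e2
            exact ebar_step_inj n b0 (hc0def.symm.trans (hch.trans e4))
          rw [if_neg hnc]
          ring
      · have hnc : ¬(a + ebar n μ + ebar n κ = c0 ∧ μ' = μ₀) := by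
          rintro ⟨hcond, rfl⟩
          exact hup ⟨κ₀, by rw [himp μ κ hcond, ← hb0def, ← hc0def]⟩
        rw [if_neg hnc]
        simp [tUp, dif_neg hup]
    rw [Finset.sum_congr rfl fun μ' _ => hterm μ']
    by_cases hcond : a + ebar n μ + ebar n κ = c0
    · simp [hcond]
    · simp [hcond]
  have hRid : R = R * (Φ * Ψ) := by rw [hΦΨ, Matrix.mul_one]
  conv_lhs => rw [hRid]
  rw [← Matrix.mul_assoc, ← Matrix.vecMul_vecMul, key]
  funext p
  simp only [Matrix.vecMul, dotProduct, hPsi, Matrix.of_apply]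
  rw [Fintype.sum_prod_type, Finset.sum_comm]
  refine Finset.sum_congr rfl fun lam _ => ?_
  by_cases h : ∃ κ : Fin n, c0 = a + ebar n lam + ebar n κ
  · have hsp := h.choose_spec
    have hci : c0 - ebar n h.choose = a + ebar n lam :=
      (congrArg (fun z => z - ebar n h.choose) hsp).trans (add_sub_cancel_right _ _)
    have hiff : ∀ κ : Fin n, (a + ebar n lam + ebar n κ = c0) ↔ κ = h.choose := by
      intro κ
      constructor
      · intro hk
        exact ebar_step_inj n (a + ebar n lam) (hk.trans hsp)
      · rintro rfl; exact hsp.symm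
    rw [dif_pos h]
    calc ∑ κ : Fin n,
          (if a + ebar n lam + ebar n κ = c0
            then faceW x r n (v₁ - v₂) c0 (c0 - ebar n κ) b0 a else 0) *
            (tstar v₁ (c0 - ebar n κ) lam p.1 * tstar v₂ c0 κ p.2)
        = ∑ κ : Fin n, if κ = h.choose
            then faceW x r n (v₁ - v₂) c0 (c0 - ebar n κ) b0 a *
              (tstar v₁ (c0 - ebar n κ) lam p.1 * tstar v₂ c0 κ p.2) else 0 := by
          refine Finset.sum_congr rfl fun κ _ => ?_
          rw [ite_mul, zero_mul]
          exact if_congr (hiff κ) rfl rfl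
      _ = faceW x r n (v₁ - v₂) c0 (c0 - ebar n h.choose) b0 a *
            (tstar v₁ (c0 - ebar n h.choose) lam p.1 * tstar v₂ c0 h.choose p.2) := by
          simp only [Finset.sum_ite_eq', Finset.mem_univ, if_true]
      _ = _ := by rw [hci]
  · rw [dif_neg h]
    have hz : ∀ κ : Fin n, ¬(a + ebar n lam + ebar n κ = c0) :=
      fun κ hk => h ⟨κ, hk.symm⟩
    simp [hz]


end
end

section
/- Corner-transfer-matrix character of the (ℤ/nℤ)-symmetric model: fix n ≥ 2, 0 < x < 1 and i ∈ ℤ/nℤ. Then the sum over all sequences μ = (μ_1, μ_2, …) with μ_j ∈ ℤ/nℤ and μ_j ≡ i+1−j (mod n) for all sufficiently large j, of x^{2·Σ_{j≥1} j·H_v(μ_j, μ_{j+1})}, converges and equals (x^{2n}; x^{2n})_∞ / (x²; x²)_∞ = ∏_{k≥1} (1 − x^{2nk})/(1 − x^{2k}); in particular its value is independent of i. -/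
noncomputable section

/-- The q-Pochhammer infinite product `(z; q)_∞ = ∏_{k ≥ 0} (1 - z q^k)` (real form). -/
def qPochR (z q : ℝ) : ℝ := ∏' k : ℕ, (1 - z * q ^ k)

/-- The local CTM energy `H_v(μ,ν)` of the `(ℤ/nℤ)`-symmetric model:
`μ - ν - 1` if `0 ≤ ν < μ ≤ n-1` and `n - 1 + μ - ν` if `0 ≤ μ ≤ ν ≤ n-1`
(on the representatives `0, …, n-1`). -/
def Hv (n : ℕ) (μ ν : ZMod n) : ℕ :=
  if ν.val < μ.val then μ.val - ν.val - 1 else n - 1 + μ.val - ν.val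

lemma hv_eq' (n : ℕ) [NeZero n] (μ ν : ZMod n) : Hv n μ ν = (μ - ν - 1).val := by
  unfold Hv
  have hn : 0 < n := Nat.pos_of_ne_zero (NeZero.ne n)
  have hμ : μ.val < n := ZMod.val_lt μ
  have hν : ν.val < n := ZMod.val_lt ν
  have hcast : ∀ m : ZMod n, ((m.val : ℕ) : ZMod n) = m := fun m => ZMod.natCast_rightInverse m
  split_ifs with h
  · have h1 : μ - ν - 1 = ((μ.val - ν.val - 1 : ℕ) : ZMod n) := by
      rw [Nat.cast_sub (by omega), Nat.cast_sub (by omega), Nat.cast_one, hcast, hcast]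
    rw [h1, ZMod.val_cast_of_lt (by omega)]
  · have h1 : μ - ν - 1 = ((n - 1 + μ.val - ν.val : ℕ) : ZMod n) := by
      rw [Nat.cast_sub (by omega), Nat.cast_add, Nat.cast_sub (by omega), Nat.cast_one,
        hcast, hcast, ZMod.natCast_self]
      ring
    rw [h1, ZMod.val_cast_of_lt (by omega)]

def ctmCC (n : ℕ) [NeZero n] (N : ℕ) (c : Fin N → ZMod n) (k : ℕ) : ZMod n :=
  if h : k < N then c ⟨k, h⟩ else 0

def ctmSeq (n : ℕ) [NeZero n] (i : ZMod n) (N : ℕ) (c : Fin N → ZMod n) (j : ℕ) : ZMod n :=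
  i - (j : ZMod n) + ∑ k ∈ Finset.Ico j N, ctmCC n N c k

lemma ctmSeq_tail (n : ℕ) [NeZero n] (i : ZMod n) (N : ℕ) (c : Fin N → ZMod n) (j : ℕ)
    (hj : N ≤ j) : ctmSeq n i N c j = i - (j : ZMod n) := by
  rw [ctmSeq, Finset.Ico_eq_empty (by omega), Finset.sum_empty, add_zero]

lemma ctmSeq_incr (n : ℕ) [NeZero n] (i : ZMod n) (N : ℕ) (c : Fin N → ZMod n) (j : ℕ) :
    ctmSeq n i N c j - ctmSeq n i N c (j + 1) - 1 = ctmCC n N c j := by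
  have hc : ((j + 1 : ℕ) : ZMod n) = (j : ZMod n) + 1 := by push_cast; ring
  by_cases hj : j < N
  · rw [ctmSeq, ctmSeq, Finset.sum_eq_sum_Ico_succ_bot hj, hc]; ring
  · rw [ctmSeq, ctmSeq, Finset.Ico_eq_empty (by omega), Finset.Ico_eq_empty (by omega), hc,
      ctmCC, dif_neg hj, Finset.sum_empty]
    ring

lemma ctmSeq_reconstruct (n : ℕ) [NeZero n] (i : ZMod n) (N : ℕ) (μ : ℕ → ZMod n)
    (hμ : ∀ j ≥ N, μ j = i - (j : ZMod n)) :
    ∀ m j, N - j ≤ m → μ j = i - (j : ZMod n) + ∑ k ∈ Finset.Ico j N, (μ k - μ (k + 1) - 1) := by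
  intro m
  induction m with
  | zero =>
    intro j hj
    rw [Finset.Ico_eq_empty (by omega), Finset.sum_empty, add_zero, hμ j (by omega)]
  | succ m ih =>
    intro j hj
    by_cases hjN : N ≤ j
    · rw [Finset.Ico_eq_empty (by omega), Finset.sum_empty, add_zero, hμ j hjN]
    · have h1 := ih (j + 1) (by omega)
      have hc : ((j + 1 : ℕ) : ZMod n) = (j : ZMod n) + 1 := by push_cast; ring
      rw [hc] at h1
      rw [Finset.sum_eq_sum_Ico_succ_bot (by omega : j < N)]
      linear_combination h1

lemma ctmSeq_eq (n : ℕ) [NeZero n] (i : ZMod n) (N : ℕ) (μ : ℕ → ZMod n)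
    (hμ : ∀ j ≥ N, μ j = i - (j : ZMod n)) :
    ctmSeq n i N (fun k : Fin N => μ k - μ (k + 1) - 1) = μ := by
  funext j
  have hs : ∑ k ∈ Finset.Ico j N, ctmCC n N (fun k : Fin N => μ k - μ (k + 1) - 1) k
      = ∑ k ∈ Finset.Ico j N, (μ k - μ (k + 1) - 1) :=
    Finset.sum_congr rfl fun k hk => by
      rw [ctmCC, dif_pos (Finset.mem_Ico.mp hk).2]
  rw [ctmSeq, hs]
  exact (ctmSeq_reconstruct n i N μ hμ (N - j) j le_rfl).symm

lemma ctmSeq_injective (n : ℕ) [NeZero n] (i : ZMod n) (N : ℕ) :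
    Function.Injective (ctmSeq n i N) := by
  intro c c' h
  funext k
  have h1 : ctmCC n N c k = ctmCC n N c' k := by
    rw [← ctmSeq_incr n i N c k, ← ctmSeq_incr n i N c' k, h]
  simpa [ctmCC, k.isLt] using h1

lemma geom_block {q : ℝ} (hq0 : 0 < q) (hq1 : q < 1) (n m : ℕ) (hm : 1 ≤ m) :
    ∑ k ∈ Finset.range n, (q ^ m) ^ k = (1 - q ^ (n * (m : ℕ))) / (1 - q ^ m) := by
  have hr1 : q ^ m ≠ 1 := ne_of_lt (pow_lt_one₀ hq0.le hq1 (by omega))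
  rw [geom_sum_eq hr1, ← pow_mul, mul_comm m n]
  rw [← neg_sub (q ^ (n * m)) 1, ← neg_sub (q ^ m) 1, neg_div_neg_eq]

lemma summable_log_one_sub {q : ℝ} (hq0 : 0 < q) (hq1 : q < 1) {e : ℕ → ℕ}
    (he : ∀ k, k + 1 ≤ e k) : Summable fun k => Real.log (1 - q ^ e k) := by
  have hqe : ∀ k, q ^ e k ≤ q ^ (k + 1) := fun k => pow_le_pow_of_le_one hq0.le hq1.le (he k)
  have hq1' : ∀ k : ℕ, q ^ (k + 1) ≤ q := fun k => by
    simpa using pow_le_pow_of_le_one hq0.le hq1.le (by omega : 1 ≤ k + 1)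
  have hpos : ∀ k, 0 < 1 - q ^ e k := fun k => by
    have := pow_lt_one₀ hq0.le hq1 (by have := he k; omega : e k ≠ 0); linarith
  rw [← summable_neg_iff]
  apply Summable.of_nonneg_of_le
    (fun k => by
      have : q ^ e k ≤ 1 := le_of_lt (by linarith [hpos k])
      have h2 : Real.log (1 - q ^ e k) ≤ 0 :=
        Real.log_nonpos (by linarith [hpos k]) (by nlinarith [pow_nonneg hq0.le (e k)])
      linarith)
    (fun k => ?_)
    (((summable_geometric_of_lt_one hq0.le hq1).mul_left (q / (1 - q))))
  -- -log(1 - q^e k) ≤ q^{k+1}/(1-q) ≤ (q/(1-q)) * q^k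
  have h3 : -Real.log (1 - q ^ e k) = Real.log (1 - q ^ e k)⁻¹ := (Real.log_inv _).symm
  have h4 : Real.log (1 - q ^ e k)⁻¹ ≤ (1 - q ^ e k)⁻¹ - 1 :=
    Real.log_le_sub_one_of_pos (inv_pos.mpr (hpos k))
  have h5 : (1 - q ^ e k)⁻¹ - 1 = q ^ e k / (1 - q ^ e k) := by
    have hne := (hpos k).ne'
    field_simp
    ring
  have h6 : q ^ e k / (1 - q ^ e k) ≤ q ^ e k / (1 - q) := by
    apply div_le_div_of_nonneg_left (by positivity) (by linarith) ?_
    have := le_trans (hqe k) (hq1' k); linarith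
  have h7 : q ^ e k / (1 - q) ≤ q ^ (k + 1) / (1 - q) := by
    apply div_le_div_of_nonneg_right (hqe k) ?_
    linarith
  have h8 : q ^ (k + 1) / (1 - q) = q / (1 - q) * q ^ k := by
    rw [pow_succ]; ring
  linarith [h3, h4, h5, h6, h7]


lemma ctm_hasSum (n : ℕ) [NeZero n] (x : ℝ) (hx0 : 0 < x) (hx1 : x < 1)
    (i : ZMod n) (P : ℝ)
    (hub : ∀ N : ℕ, ∏ j ∈ Finset.range N,
      (∑ k ∈ Finset.range n, ((x ^ 2) ^ (j + 1)) ^ k) ≤ P)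
    (htend : Filter.Tendsto
      (fun N => ∏ j ∈ Finset.range N, (∑ k ∈ Finset.range n, ((x ^ 2) ^ (j + 1)) ^ k))
      Filter.atTop (nhds P)) :
    HasSum
      (fun μ : {ν : ℕ → ZMod n // ∃ J : ℕ, ∀ j ≥ J, ν j = i - (j : ZMod n)} =>
        x ^ (2 * ∑' j : ℕ, (((j + 1 : ℕ) : ℝ) * (Hv n (μ.1 j) (μ.1 (j + 1)) : ℝ))))
      P := by
  classical
  set q : ℝ := x ^ 2 with hq
  set A := {ν : ℕ → ZMod n // ∃ J : ℕ, ∀ j ≥ J, ν j = i - (j : ZMod n)} with hA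
  set F := (fun μ : A =>
    x ^ (2 * ∑' j : ℕ, (((j + 1 : ℕ) : ℝ) * (Hv n (μ.1 j) (μ.1 (j + 1)) : ℝ)))) with hF
  have hFnn : ∀ μ : A, 0 ≤ F μ := fun μ => Real.rpow_nonneg hx0.le _
  -- zero energy on the tail
  have hHv0 : ∀ j : ℕ, Hv n (i - (j : ZMod n)) (i - ((j + 1 : ℕ) : ZMod n)) = 0 := by
    intro j
    rw [hv_eq']
    have hc : ((j + 1 : ℕ) : ZMod n) = (j : ZMod n) + 1 := by push_cast; ring
    rw [hc]
    have h0 : i - (j : ZMod n) - (i - ((j : ZMod n) + 1)) - 1 = 0 := by ring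
    rw [h0, ZMod.val_zero]
  -- value of F on sequences with tail at N
  have hf_formula : ∀ (μ : A) (N : ℕ), (∀ j ≥ N, μ.1 j = i - (j : ZMod n)) →
      F μ = ∏ j ∈ Finset.range N, q ^ ((j + 1) * Hv n (μ.1 j) (μ.1 (j + 1))) := by
    intro μ N hμ
    have hzero : ∀ j ∉ Finset.range N,
        (((j + 1 : ℕ) : ℝ) * (Hv n (μ.1 j) (μ.1 (j + 1)) : ℝ)) = 0 := by
      intro j hj
      have hjN : N ≤ j := by simpa using hj
      rw [hμ j hjN, hμ (j + 1) (by omega), hHv0 j]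
      simp
    simp only [hF]
    rw [tsum_eq_sum hzero]
    have hcast : (2 * ∑ j ∈ Finset.range N, (((j + 1 : ℕ) : ℝ) * (Hv n (μ.1 j) (μ.1 (j + 1)) : ℝ)))
        = ((2 * ∑ j ∈ Finset.range N, (j + 1) * Hv n (μ.1 j) (μ.1 (j + 1)) : ℕ) : ℝ) := by
      push_cast; ring
    rw [hcast, Real.rpow_natCast, pow_mul, ← hq, Finset.prod_pow_eq_pow_sum]
  -- the parametrization of tail-N configurations
  set Φ : (N : ℕ) → (Fin N → ZMod n) → A := fun N c =>
    ⟨ctmSeq n i N c, N, fun j hj => ctmSeq_tail n i N c j hj⟩ with hΦ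
  have hΦ_inj : ∀ N, Function.Injective (Φ N) := fun N c c' h =>
    ctmSeq_injective n i N (congrArg Subtype.val h)
  have hFΦ : ∀ (N : ℕ) (c : Fin N → ZMod n),
      F (Φ N c) = ∏ j ∈ Finset.range N, q ^ ((j + 1) * (ctmCC n N c j).val) := by
    intro N c
    rw [hf_formula (Φ N c) N (fun j hj => ctmSeq_tail n i N c j hj)]
    refine Finset.prod_congr rfl fun j _ => ?_
    have : Hv n (ctmSeq n i N c j) (ctmSeq n i N c (j + 1)) = (ctmCC n N c j).val := by
      rw [hv_eq', ctmSeq_incr]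
    rw [this]
  -- per-site sums
  have hsite : ∀ m : ℕ, (∑ k : ZMod n, q ^ (m * (k).val)) = ∑ k ∈ Finset.range n, (q ^ m) ^ k := by
    intro m
    rw [Finset.sum_nbij' (i := fun k : ZMod n => k.val) (j := fun k : ℕ => (k : ZMod n))
      (hi := fun k _ => Finset.mem_range.mpr (ZMod.val_lt k))
      (hj := fun k _ => Finset.mem_univ _)
      (left_neg := fun k _ => ZMod.natCast_rightInverse k)
      (right_neg := fun k hk => ZMod.val_cast_of_lt (Finset.mem_range.mp hk))
      (h := fun k _ => by rw [pow_mul])]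
  -- sum over the image of Φ N
  have himage_sum : ∀ N : ℕ,
      (∑ c : Fin N → ZMod n, F (Φ N c)) = ∏ j ∈ Finset.range N, (∑ k ∈ Finset.range n, (q ^ (j + 1)) ^ k) := by
    intro N
    have h1 : ∀ c : Fin N → ZMod n,
        F (Φ N c) = ∏ j : Fin N, q ^ (((j : ℕ) + 1) * (c j).val) := by
      intro c
      rw [hFΦ N c, ← Fin.prod_univ_eq_prod_range]
      refine Finset.prod_congr rfl fun j _ => ?_
      rw [ctmCC, dif_pos j.isLt, Fin.eta]
    calc (∑ c : Fin N → ZMod n, F (Φ N c))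
        = ∑ c : Fin N → ZMod n, ∏ j : Fin N, q ^ (((j : ℕ) + 1) * (c j).val) :=
          Finset.sum_congr rfl fun c _ => h1 c
      _ = ∏ j : Fin N, ∑ k : ZMod n, q ^ (((j : ℕ) + 1) * k.val) := by
          rw [Finset.prod_univ_sum, Fintype.piFinset_univ]
      _ = ∏ j : Fin N, ∑ k ∈ Finset.range n, (q ^ ((j : ℕ) + 1)) ^ k :=
          Finset.prod_congr rfl fun j _ => hsite ((j : ℕ) + 1)
      _ = ∏ j ∈ Finset.range N, (∑ k ∈ Finset.range n, (q ^ (j + 1)) ^ k) :=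
          Fin.prod_univ_eq_prod_range (fun j => ∑ k ∈ Finset.range n, (q ^ (j + 1)) ^ k) N
  have himg : ∀ N : ℕ, ∑ μ ∈ Finset.image (Φ N) Finset.univ, F μ
      = ∏ j ∈ Finset.range N, (∑ k ∈ Finset.range n, (q ^ (j + 1)) ^ k) := by
    intro N
    rw [Finset.sum_image (fun a _ b _ h => hΦ_inj N h)]
    exact himage_sum N
  apply hasSum_of_isLUB_of_nonneg P hFnn
  constructor
  · rintro r ⟨s, rfl⟩
    have hsub : s ⊆ Finset.image (Φ (s.sup fun μ => μ.2.choose)) Finset.univ := by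
      intro μ hμs
      have hμ : ∀ j ≥ s.sup (fun μ => μ.2.choose), μ.1 j = i - (j : ZMod n) := fun j hj =>
        μ.2.choose_spec j (le_trans (Finset.le_sup (f := fun μ : A => μ.2.choose) hμs) hj)
      refine Finset.mem_image.mpr ⟨fun k : Fin _ => μ.1 k - μ.1 (k + 1) - 1, Finset.mem_univ _, ?_⟩
      exact Subtype.ext (ctmSeq_eq n i _ μ.1 hμ)
    calc ∑ μ ∈ s, F μ ≤ ∑ μ ∈ Finset.image (Φ (s.sup fun μ => μ.2.choose)) Finset.univ, F μ :=
          Finset.sum_le_sum_of_subset_of_nonneg hsub fun μ _ _ => hFnn μ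
      _ = _ := himg _
      _ ≤ P := hub _
  · intro b hb
    refine le_of_tendsto htend (Filter.Eventually.of_forall fun N => ?_)
    rw [← himg N]
    exact hb ⟨Finset.image (Φ N) Finset.univ, rfl⟩


/-- Corner-transfer-matrix character of the `(ℤ/nℤ)`-symmetric model: the sum of
`x^{2 Σ_{j≥1} j H_v(μ_j, μ_{j+1})}` over all sequences `(μ_1, μ_2, …)` in `ℤ/nℤ`
with `μ_j ≡ i+1-j (mod n)` for large `j` (encoded 0-based: `ν_j = μ_{j+1} = i - j`
eventually) converges to `(x^{2n};x^{2n})_∞ / (x²;x²)_∞ = ∏_{k≥1}(1-x^{2nk})/(1-x^{2k})`,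
independently of `i`. -/
theorem ctm_character (n : ℕ) [NeZero n] (hn : 2 ≤ n) (x : ℝ) (hx0 : 0 < x)
    (hx1 : x < 1) (i : ZMod n) :
    HasSum
      (fun μ : {ν : ℕ → ZMod n // ∃ J : ℕ, ∀ j ≥ J, ν j = i - (j : ZMod n)} =>
        x ^ (2 * ∑' j : ℕ, (((j + 1 : ℕ) : ℝ) * (Hv n (μ.1 j) (μ.1 (j + 1)) : ℝ))))
      (qPochR (x ^ (2 * n)) (x ^ (2 * n)) / qPochR (x ^ 2) (x ^ 2)) ∧
    qPochR (x ^ (2 * n)) (x ^ (2 * n)) / qPochR (x ^ 2) (x ^ 2) =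
      ∏' k : ℕ, ((1 - x ^ (2 * n * (k + 1))) / (1 - x ^ (2 * (k + 1)))) := by
  classical
  have hq0 : (0 : ℝ) < x ^ 2 := by positivity
  have hq1 : x ^ 2 < 1 := by nlinarith
  set q : ℝ := x ^ 2 with hq
  -- the per-column sums and their logs
  set S : ℕ → ℝ := fun m => ∑ k ∈ Finset.range n, (q ^ m) ^ k with hS
  set u : ℕ → ℝ := fun k => 1 - q ^ (n * (k + 1)) with hu
  set v : ℕ → ℝ := fun k => 1 - q ^ (k + 1) with hv
  have hupos : ∀ k, 0 < u k := fun k => by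
    have := pow_lt_one₀ hq0.le hq1 (by have : 0 < n := Nat.pos_of_ne_zero (NeZero.ne n); positivity
      : n * (k + 1) ≠ 0)
    simp only [hu]; linarith
  have hvpos : ∀ k, 0 < v k := fun k => by
    have := pow_lt_one₀ hq0.le hq1 (by omega : k + 1 ≠ 0)
    simp only [hv]; linarith
  have hSeq : ∀ k : ℕ, S (k + 1) = u k / v k := fun k =>
    geom_block hq0 hq1 n (k + 1) (by omega)
  have hS1 : ∀ m, (1 : ℝ) ≤ S m := by
    intro m
    have h0 : ((q ^ m) ^ (0 : ℕ) : ℝ) = 1 := pow_zero _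
    calc (1 : ℝ) = (q ^ m) ^ (0 : ℕ) := h0.symm
      _ ≤ S m := Finset.single_le_sum (f := fun k => (q ^ m) ^ k)
          (fun k _ => by positivity) (Finset.mem_range.mpr (by omega))
  have hSpos : ∀ m, 0 < S m := fun m => lt_of_lt_of_le one_pos (hS1 m)
  set w : ℕ → ℝ := fun j => Real.log (S (j + 1)) with hw
  have hwnn : ∀ j, 0 ≤ w j := fun j => Real.log_nonneg (hS1 _)
  have hwle : ∀ j, w j ≤ (n : ℝ) * q ^ j := by
    intro j
    have h1 : w j ≤ S (j + 1) - 1 := by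
      have := Real.log_le_sub_one_of_pos (hSpos (j + 1)); simpa [hw] using this
    have h2 : S (j + 1) - 1 ≤ (n : ℝ) * q ^ (j + 1) := by
      have hsplit : S (j + 1) = 1 + ∑ k ∈ Finset.Ico 1 n, (q ^ (j + 1)) ^ k := by
        show ∑ k ∈ Finset.range n, (q ^ (j + 1)) ^ k = _
        rw [Finset.range_eq_Ico, Finset.sum_eq_sum_Ico_succ_bot (by omega : 0 < n)]
        simp
      have hbound : ∑ k ∈ Finset.Ico 1 n, (q ^ (j + 1)) ^ k ≤ (n : ℝ) * q ^ (j + 1) := by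
        have h3 : ∀ k ∈ Finset.Ico 1 n, (q ^ (j + 1)) ^ k ≤ q ^ (j + 1) := by
          intro k hk
          have hk1 : 1 ≤ k := (Finset.mem_Ico.mp hk).1
          have := pow_le_pow_of_le_one (by positivity : (0:ℝ) ≤ q ^ (j+1))
            (le_of_lt (pow_lt_one₀ hq0.le hq1 (Nat.succ_ne_zero j))) hk1
          simpa using this
        calc ∑ k ∈ Finset.Ico 1 n, (q ^ (j + 1)) ^ k
            ≤ ∑ k ∈ Finset.Ico 1 n, q ^ (j + 1) := Finset.sum_le_sum h3
          _ = ((n - 1 : ℕ) : ℝ) * q ^ (j + 1) := by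
              rw [Finset.sum_const, Nat.card_Ico, nsmul_eq_mul]
          _ ≤ (n : ℝ) * q ^ (j + 1) := by
              have : ((n - 1 : ℕ) : ℝ) ≤ (n : ℝ) := by
                have : (n - 1 : ℕ) ≤ n := by omega
                exact_mod_cast this
              nlinarith [pow_pos hq0 (j + 1)]
      linarith [hsplit ▸ le_refl (S (j+1))]
    have h4 : (n : ℝ) * q ^ (j + 1) ≤ (n : ℝ) * q ^ j := by
      have := pow_le_pow_of_le_one hq0.le hq1.le (by omega : j ≤ j + 1)
      have hn0 : (0:ℝ) ≤ (n:ℝ) := by positivity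
      nlinarith
    linarith
  have hwsum : Summable w :=
    Summable.of_nonneg_of_le hwnn hwle
      ((summable_geometric_of_lt_one hq0.le hq1).mul_left _)
  set W := ∑' j, w j with hWdef
  have hW : HasSum w W := hwsum.hasSum
  set P := Real.exp W with hP
  have hprodexp : (fun N => ∏ j ∈ Finset.range N, S (j + 1))
      = fun N => Real.exp (∑ j ∈ Finset.range N, w j) := by
    funext N
    rw [Real.exp_sum]
    exact Finset.prod_congr rfl fun j _ => (Real.exp_log (hSpos _)).symm
  have hub : ∀ N : ℕ, ∏ j ∈ Finset.range N, S (j + 1) ≤ P := by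
    intro N
    have := congrFun hprodexp N
    rw [this, hP]
    exact Real.exp_le_exp.mpr (Summable.sum_le_tsum _ (fun j _ => hwnn j) hwsum)
  have htend : Filter.Tendsto (fun N => ∏ j ∈ Finset.range N, S (j + 1))
      Filter.atTop (nhds P) := by
    rw [hprodexp, hP]
    exact (Real.continuous_exp.tendsto W).comp hW.tendsto_sum_nat
  -- logs of u and v
  have hlu : Summable fun k => Real.log (u k) := by
    refine summable_log_one_sub hq0 hq1 (e := fun k => n * (k + 1)) fun k => ?_
    have h1 : 1 ≤ n := by omega
    nlinarith
  have hlv : Summable fun k => Real.log (v k) :=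
    summable_log_one_sub hq0 hq1 (e := fun k => k + 1) fun k => le_rfl
  set LU := ∑' k, Real.log (u k) with hLU
  set LV := ∑' k, Real.log (v k) with hLV
  have hUprod : HasProd u (Real.exp LU) := by
    have h := hlu.hasSum.rexp
    have h2 : Real.exp ∘ (fun k => Real.log (u k)) = u :=
      funext fun k => Real.exp_log (hupos k)
    rwa [h2] at h
  have hVprod : HasProd v (Real.exp LV) := by
    have h := hlv.hasSum.rexp
    have h2 : Real.exp ∘ (fun k => Real.log (v k)) = v :=
      funext fun k => Real.exp_log (hvpos k)
    rwa [h2] at h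
  have hWLULV : W = LU - LV := by
    have h1 : HasSum (fun k => Real.log (u k) - Real.log (v k)) (LU - LV) :=
      hlu.hasSum.sub hlv.hasSum
    have h2 : (fun k => Real.log (u k) - Real.log (v k)) = w := by
      funext k
      rw [hw]
      show Real.log (u k) - Real.log (v k) = Real.log (S (k + 1))
      rw [hSeq k, Real.log_div (hupos k).ne' (hvpos k).ne']
    rw [h2] at h1
    exact hW.unique h1
  -- qPochR identifications
  have hfacnum : ∀ k : ℕ, 1 - x ^ (2 * n) * (x ^ (2 * n)) ^ k = u k := by
    intro k
    have : x ^ (2 * n) * (x ^ (2 * n)) ^ k = q ^ (n * (k + 1)) := by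
      rw [← pow_succ', ← pow_mul, mul_assoc, pow_mul, ← hq]
    rw [this, hu]
  have hfacden : ∀ k : ℕ, 1 - x ^ 2 * (x ^ 2) ^ k = v k := by
    intro k
    have : x ^ 2 * (x ^ 2) ^ k = q ^ (k + 1) := by
      rw [← pow_succ', ← hq]
    rw [this, hv]
  have hqnum : qPochR (x ^ (2 * n)) (x ^ (2 * n)) = Real.exp LU := by
    rw [qPochR, tprod_congr hfacnum, hUprod.tprod_eq]
  have hqden : qPochR (x ^ 2) (x ^ 2) = Real.exp LV := by
    rw [qPochR, tprod_congr hfacden, hVprod.tprod_eq]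
  have hval : qPochR (x ^ (2 * n)) (x ^ (2 * n)) / qPochR (x ^ 2) (x ^ 2) = P := by
    rw [hqnum, hqden, hP, hWLULV, Real.exp_sub]
  have hSprod : HasProd (fun j : ℕ => S (j + 1)) P := by
    have h := hW.rexp
    have h2 : Real.exp ∘ w = fun j => S (j + 1) :=
      funext fun j => Real.exp_log (hSpos _)
    rwa [h2] at h
  have hconj2 : P = ∏' k : ℕ, ((1 - x ^ (2 * n * (k + 1))) / (1 - x ^ (2 * (k + 1)))) := by
    rw [← hSprod.tprod_eq]
    refine tprod_congr fun k => ?_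
    rw [hSeq k, hu, hv]
    show (1 - q ^ (n * (k + 1))) / (1 - q ^ (k + 1)) = _
    rw [hq, ← pow_mul, ← pow_mul, ← mul_assoc]
  refine ⟨?_, by rw [hval]; exact hconj2⟩
  rw [hval]
  exact ctm_hasSum n x hx0 hx1 i P hub htend

end
end
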